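/- With u(x) = 1/h(x) − (1−x²)/2 + 1/(4m), m ≥ 2: u(0) = 0, u'(0) = 0, u''(0) = −1/(m(2m−3)), u(1) = 1/(2m), and u'(1) = 2/3 + 1/(3m). -/

import Mathlib

open Finset


/-- The coefficients `β_k = 2 (2m)(2m−2)⋯(2m−2k) / ((2m−1)(2m−3)⋯(2m−2k−1))`. -/
noncomputable def betaCoef (m k : ℕ) : ℝ :=
  2 * (∏ j ∈ Finset.range (k + 1), ((2 * m : ℝ) - 2 * j)) /
    (∏ j ∈ Finset.range (k + 1), ((2 * m : ℝ) - 2 * j - 1))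

/-- The polynomial `h(x) = ∑_{k=0}^{m−1} β_k x^{2k}`. -/
noncomputable def hFun (m : ℕ) (x : ℝ) : ℝ :=
  ∑ k ∈ Finset.range m, betaCoef m k * x ^ (2 * k)

/-- The function `u(x) = 1/h(x) − (1−x²)/2 + 1/(4m)`. -/
noncomputable def uFun (m : ℕ) (x : ℝ) : ℝ :=
  1 / hFun m x - (1 - x ^ 2) / 2 + 1 / (4 * m)

lemma odd_ne_zero (m j : ℕ) : (2 * (m:ℝ) - 2 * j - 1) ≠ 0 := by
  have h : ((2*(m:ℤ) - 2*(j:ℤ) - 1 : ℤ) : ℝ) = 2*(m:ℝ) - 2*(j:ℝ) - 1 := by push_cast; ring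
  rw [← h]
  exact_mod_cast (by omega : 2*(m:ℤ) - 2*(j:ℤ) - 1 ≠ 0)

lemma denom_ne (m k : ℕ) : (∏ j ∈ Finset.range (k + 1), ((2 * m : ℝ) - 2 * j - 1)) ≠ 0 :=
  Finset.prod_ne_zero_iff.mpr fun j _ => odd_ne_zero m j

lemma beta_rec (m k : ℕ) :
    betaCoef m (k+1) * (2*(m:ℝ) - 2*(k+1) - 1) = betaCoef m k * (2*(m:ℝ) - 2*(k+1)) := by
  unfold betaCoef
  rw [prod_range_succ _ (k+1), prod_range_succ _ (k+1)]
  have hQ := denom_ne m k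
  have hb := odd_ne_zero m (k+1)
  push_cast at hb ⊢
  rw [div_mul_eq_mul_div, div_mul_eq_mul_div, div_eq_div_iff (mul_ne_zero hQ hb) hQ]
  ring

lemma beta_zero_mul (m : ℕ) : betaCoef m 0 * (2*(m:ℝ) - 1) = 4*m := by
  have h0 : (2*(m:ℝ) - 1) ≠ 0 := by simpa using odd_ne_zero m 0
  unfold betaCoef
  rw [prod_range_one, prod_range_one]
  norm_num
  field_simp
  ring

lemma sum_beta (m n : ℕ) :
    ∑ k ∈ range (n+1), betaCoef m k = 4*m - (2*(m:ℝ) - 2*(n+1)) * betaCoef m n := by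
  induction n with
  | zero =>
      rw [Finset.sum_range_one]
      have hz := beta_zero_mul m
      push_cast
      linear_combination hz
  | succ n ih =>
      rw [Finset.sum_range_succ, ih]
      have hrec := beta_rec m n
      push_cast at hrec ⊢
      linear_combination hrec

lemma sum_kbeta (m n : ℕ) :
    ∑ k ∈ range (n+1), 2*(k:ℝ) * betaCoef m k =
      (16*m*(m-1) - (2*(m:ℝ) - 2*(n+1)) * (4*m + 2*n - 2) * betaCoef m n) / 3 := by
  induction n with
  | zero =>
      rw [Finset.sum_range_one]
      have hz := beta_zero_mul m
      push_cast
      linear_combination (4*((m:ℝ)-1)/3) * hz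
  | succ n ih =>
      rw [Finset.sum_range_succ, ih]
      have hrec := beta_rec m n
      push_cast at hrec ⊢
      linear_combination ((4*(m:ℝ)+2*n-2)/3) * hrec

lemma beta_pos (m k : ℕ) (hk : k < m) : 0 < betaCoef m k := by
  unfold betaCoef
  apply div_pos
  · apply mul_pos two_pos
    apply Finset.prod_pos
    intro j hj
    have : j + 1 ≤ m := by have := Finset.mem_range.mp hj; omega
    have : (j:ℝ) + 1 ≤ m := by exact_mod_cast this
    linarith
  · apply Finset.prod_pos
    intro j hj
    have : j + 1 ≤ m := by have := Finset.mem_range.mp hj; omega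
    have : (j:ℝ) + 1 ≤ m := by exact_mod_cast this
    linarith

lemma hFun_pos (m : ℕ) (hm : 1 ≤ m) (x : ℝ) : 0 < hFun m x := by
  unfold hFun
  apply Finset.sum_pos'
  · intro k hk
    have h1 : 0 < betaCoef m k := beta_pos m k (Finset.mem_range.mp hk)
    have h2 : (0:ℝ) ≤ x ^ (2*k) := by rw [pow_mul]; positivity
    positivity
  · exact ⟨0, Finset.mem_range.mpr (by omega), by simpa using beta_pos m 0 (by omega)⟩

noncomputable def hD (m : ℕ) (x : ℝ) : ℝ :=
  ∑ k ∈ Finset.range m, betaCoef m k * (((2*k : ℕ) : ℝ) * x ^ (2*k - 1))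

noncomputable def hD2 (m : ℕ) (x : ℝ) : ℝ :=
  ∑ k ∈ Finset.range m, betaCoef m k * (((2*k : ℕ) : ℝ) * (((2*k - 1 : ℕ) : ℝ) * x ^ (2*k - 1 - 1)))

lemma hasDerivAt_hFun (m : ℕ) (x : ℝ) : HasDerivAt (hFun m) (hD m x) x := by
  unfold hFun hD
  exact HasDerivAt.fun_sum fun k _ => (hasDerivAt_pow (2*k) x).const_mul (betaCoef m k)

lemma hasDerivAt_hD (m : ℕ) (x : ℝ) : HasDerivAt (hD m) (hD2 m x) x := by
  unfold hD hD2
  exact HasDerivAt.fun_sum fun k _ =>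
    (((hasDerivAt_pow (2*k - 1) x).const_mul ((2*k : ℕ) : ℝ)).const_mul (betaCoef m k))

lemma hFun_zero (m : ℕ) (hm : 2 ≤ m) : hFun m 0 = betaCoef m 0 := by
  unfold hFun
  rw [Finset.sum_eq_single 0]
  · simp
  · intro k _ hk
    rw [zero_pow (by omega), mul_zero]
  · intro h; exact absurd (Finset.mem_range.mpr (by omega)) h

lemma hD_zero (m : ℕ) : hD m 0 = 0 := by
  unfold hD
  apply Finset.sum_eq_zero
  intro k _
  match k with
  | 0 => simp
  | (k+1) => rw [zero_pow (by omega), mul_zero, mul_zero]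

lemma hD2_zero (m : ℕ) (hm : 2 ≤ m) : hD2 m 0 = 2 * betaCoef m 1 := by
  unfold hD2
  rw [Finset.sum_eq_single 1]
  · norm_num; ring
  · intro k _ hk
    match k with
    | 0 => simp
    | 1 => exact absurd rfl hk
    | (k+2) => rw [zero_pow (by omega)]; ring
  · intro h; exact absurd (Finset.mem_range.mpr (by omega)) h

lemma hFun_one (m : ℕ) (hm : 2 ≤ m) : hFun m 1 = 4 * m := by
  obtain ⟨n, rfl⟩ : ∃ n, m = n + 1 := ⟨m - 1, by omega⟩
  unfold hFun
  simp only [one_pow, mul_one]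
  rw [sum_beta]
  push_cast
  ring

lemma hD_one (m : ℕ) (hm : 2 ≤ m) : hD m 1 = 16 * m * (m - 1) / 3 := by
  obtain ⟨n, rfl⟩ : ∃ n, m = n + 1 := ⟨m - 1, by omega⟩
  unfold hD
  simp only [one_pow, mul_one]
  have h : ∀ k, betaCoef (n+1) k * ((2*k : ℕ) : ℝ) = 2*(k:ℝ) * betaCoef (n+1) k := by
    intro k; push_cast; ring
  rw [Finset.sum_congr rfl fun k _ => h k, sum_kbeta]
  push_cast
  ring

lemma hasDerivAt_uFun (m : ℕ) (hm : 2 ≤ m) (x : ℝ) :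
    HasDerivAt (uFun m) (-(hD m x) / (hFun m x)^2 + x) x := by
  have h0 : hFun m x ≠ 0 := (hFun_pos m (by omega) x).ne'
  have h1 : HasDerivAt (fun y => 1 / hFun m y) (-(hD m x) / (hFun m x)^2) x := by
    have := (hasDerivAt_hFun m x).inv h0
    simp only [one_div]; exact this
  have h2 : HasDerivAt (fun y : ℝ => (1 - y^2)/2) (-x) x := by
    have := ((hasDerivAt_pow 2 x).const_sub 1).div_const 2
    rw [show -x = -(((2:ℕ):ℝ) * x ^ (2-1)) / 2 by push_cast; ring]
    exact this
  have h3 := (h1.sub h2).add_const (1 / (4*(m:ℝ)))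
  have he : uFun m = fun y => (1 / hFun m y - (1 - y^2)/2) + 1/(4*(m:ℝ)) := by
    funext y; simp [uFun]
  rw [he]
  rw [show -(hD m x) / (hFun m x)^2 + x = -(hD m x) / (hFun m x)^2 - -x by ring]
  exact h3

lemma deriv_uFun (m : ℕ) (hm : 2 ≤ m) (x : ℝ) :
    deriv (uFun m) x = -(hD m x) / (hFun m x)^2 + x :=
  (hasDerivAt_uFun m hm x).deriv

lemma beta_zero_val (m : ℕ) (hm : 2 ≤ m) : betaCoef m 0 = 4*m / (2*(m:ℝ) - 1) := by
  have hm' : (2:ℝ) ≤ (m:ℝ) := by exact_mod_cast hm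
  have h1 : (2*(m:ℝ) - 1) ≠ 0 := by intro h; nlinarith
  rw [eq_div_iff h1]
  linear_combination beta_zero_mul m

lemma beta_one_val (m : ℕ) (hm : 2 ≤ m) :
    betaCoef m 1 = 8*m*((m:ℝ)-1) / ((2*(m:ℝ)-1)*(2*(m:ℝ)-3)) := by
  have hm' : (2:ℝ) ≤ (m:ℝ) := by exact_mod_cast hm
  have h1 : (2*(m:ℝ) - 1) ≠ 0 := by intro h; nlinarith
  have h3 : (2*(m:ℝ) - 3) ≠ 0 := by intro h; nlinarith
  have hr := beta_rec m 0
  rw [beta_zero_val m hm] at hr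
  push_cast at hr
  field_simp at hr ⊢
  linear_combination hr

/-- Boundary values and derivatives of `u`:
`u(0)=0`, `u'(0)=0`, `u''(0)=−1/(m(2m−3))`, `u(1)=1/(2m)`, `u'(1)=2/3+1/(3m)`. -/
theorem uFun_boundary_values (m : ℕ) (hm : 2 ≤ m) :
    uFun m 0 = 0 ∧ deriv (uFun m) 0 = 0 ∧
      deriv (deriv (uFun m)) 0 = -1 / ((m : ℝ) * (2 * m - 3)) ∧
      uFun m 1 = 1 / (2 * m) ∧ deriv (uFun m) 1 = 2 / 3 + 1 / (3 * m) := by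
  have hm' : (2:ℝ) ≤ (m:ℝ) := by exact_mod_cast hm
  have hmne : (m:ℝ) ≠ 0 := by positivity
  have h1 : (2*(m:ℝ) - 1) ≠ 0 := by intro h; nlinarith
  have h3 : (2*(m:ℝ) - 3) ≠ 0 := by intro h; nlinarith
  have h0ne : hFun m 0 ≠ 0 := (hFun_pos m (by omega) 0).ne'
  refine ⟨?_, ?_, ?_, ?_, ?_⟩
  · unfold uFun
    rw [hFun_zero m hm, beta_zero_val m hm]
    field_simp
    ring
  · rw [deriv_uFun m hm 0, hD_zero]
    simp
  · -- second derivative at 0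
    have hfeq : deriv (uFun m) = fun x => -(hD m x) / (hFun m x)^2 + x :=
      funext (deriv_uFun m hm)
    rw [hfeq]
    have hpow : HasDerivAt (fun x => (hFun m x)^2)
        (((2:ℕ):ℝ) * hFun m 0 ^ (2-1) * hD m 0) 0 := (hasDerivAt_hFun m 0).pow 2
    have hdiv := (hasDerivAt_hD m 0).div hpow (pow_ne_zero 2 h0ne)
    have hfull := (hdiv.neg).add (hasDerivAt_id 0)
    have heq : (fun x => -(hD m x) / (hFun m x)^2 + x)
        = fun x => -(hD m x / (hFun m x)^2) + id x := by
      funext y; rw [neg_div]; rfl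
    rw [heq, show (fun x => -(hD m x / (hFun m x)^2) + id x) = (-(hD m / fun x => hFun m x ^ 2) + id) from rfl, hfull.deriv]
    rw [hD_zero, hD2_zero m hm, hFun_zero m hm, beta_zero_val m hm, beta_one_val m hm]
    have hb0ne : (4*(m:ℝ)/(2*(m:ℝ)-1)) ≠ 0 := by positivity
    field_simp
    ring
  · unfold uFun
    rw [hFun_one m hm]
    field_simp
    ring
  · rw [deriv_uFun m hm 1, hD_one m hm, hFun_one m hm]
    field_simp
    ring
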